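/- arXiv:1012.5617 — 3 statements merged into one kernel-verified Lean document; each statement's English description precedes it below -/
import Mathlib

section
/- Every nonempty smooth word over {1,2} (a word in which neither 111 nor 222 occurs and which is arbitrarily often differentiable) has at most 8 primitives, where a primitive of w is a word v with D(v) = w. -/
/-- Run lengths of a word: lengths of maximal blocks of equal letters. -/
def runLengths (w : List ℕ) : List ℕ :=
  (w.splitBy (· = ·)).map List.length

/-- The run-length derivative: run lengths, discarding the first and/or last
run if it has length one. -/
def wderiv (w : List ℕ) : List ℕ :=
  let r := runLengths w
  let r1 := if r.head? = some 1 then r.tail else r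
  if r1.getLast? = some 1 then r1.dropLast else r1

/-- `w` is a word over the alphabet {1,2}. -/
def IsWord (w : List ℕ) : Prop := ∀ a ∈ w, a = 1 ∨ a = 2

/-- `w` is differentiable: a word over {1,2} avoiding 111 and 222. -/
def Differentiable' (w : List ℕ) : Prop :=
  IsWord w ∧ ¬ ([1,1,1] <:+: w) ∧ ¬ ([2,2,2] <:+: w)

/-- `w` is smooth (C^∞): arbitrarily often differentiable. -/
def SmoothWord (w : List ℕ) : Prop := ∀ k : ℕ, Differentiable' (wderiv^[k] w)

/-- The height of a smooth word: least `k` with `D^k(w) = ε`. -/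
noncomputable def height (w : List ℕ) : ℕ := sInf {k | wderiv^[k] w = []}

/-- `P^k(ε)`: the set of smooth words of height `k`. -/
def Pk (k : ℕ) : Set (List ℕ) := {w | SmoothWord w ∧ height w = k}

/-- `v` is a primitive of `w`: a smooth word with `D(v) = w`. -/
def Primitive (v w : List ℕ) : Prop := SmoothWord v ∧ wderiv v = w

/-- Simple right extension: `w = uα` for a letter `α ∈ {1,2}`. -/
def SRE (u w : List ℕ) : Prop := ∃ α, (α = 1 ∨ α = 2) ∧ w = u ++ [α]

/-- Maximal right smooth extension (MRSE) chain of height `k`,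
represented as the (nonempty) list of its members. -/
def MRSE (k : ℕ) (c : List (List ℕ)) : Prop :=
  c ≠ [] ∧ (∀ u ∈ c, u ∈ Pk k) ∧ c.Chain' SRE ∧
  (∀ v ∈ Pk k, ∀ u₁, c.head? = some u₁ → ¬ SRE v u₁) ∧
  (∀ v ∈ Pk k, ∀ um, c.getLast? = some um → ¬ SRE um v)

/-- `H^k`: the set of MRSE chains of height `k`. -/
def Hset (k : ℕ) : Set (List (List ℕ)) := {c | MRSE k c}

/-- Letter complement: swaps 1 and 2. -/
def bar (a : ℕ) : ℕ := if a = 1 then 2 else 1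

/-!
A word over {1,2} is determined by its first letter and its sequence of run lengths. If
`D(v) = w`, the run lengths of `v` are `w` with possibly a run of length one restored at
either end, so a primitive of `w` is one of `2 · 4` words.
-/

def fromRuns : ℕ → List ℕ → List ℕ
  | _, [] => []
  | a, n :: r => List.replicate n a ++ fromRuns (bar a) r

lemma eq_bar_of_ne {a b : ℕ} (ha : a = 1 ∨ a = 2) (hb : b = 1 ∨ b = 2) (h : a ≠ b) :
    b = bar a := by
  rcases ha with rfl | rfl <;> rcases hb with rfl | rfl <;> simp_all [bar]

lemma flatten_eq_fromRuns {a : ℕ} {cs : List (List ℕ)}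
    (hblock : ∀ m ∈ cs, m ≠ [] ∧ m.IsChain (· = ·))
    (hborder : cs.IsChain fun m m' => ∃ hm hm', m.getLast hm ≠ m'.head hm')
    (hword : ∀ x ∈ cs.flatten, x = 1 ∨ x = 2) (hhead : ∀ x ∈ cs.flatten.head?, x = a) :
    cs.flatten = fromRuns a (cs.map List.length) := by
  induction cs generalizing a with
  | nil => rfl
  | cons m cs ih =>
    obtain ⟨hm, hconst⟩ := hblock m List.mem_cons_self
    have hma : m = List.replicate m.length a := by
      obtain ⟨b, rest, rfl⟩ := List.exists_cons_of_ne_nil hm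
      have hb : b = a := hhead b (by simp)
      subst hb
      exact List.isChain_eq_iff_eq_replicate.1 hconst b rfl
    have hrest : cs.flatten = fromRuns (bar a) (cs.map List.length) := by
      refine ih (fun m' hm' => hblock m' (List.mem_cons_of_mem _ hm')) hborder.tail
        (fun x hx => hword x (by simp [hx])) ?_
      rcases cs with _ | ⟨m', cs⟩
      · simp
      obtain ⟨hm', -⟩ := hblock m' (by simp)
      obtain ⟨_, _, hne⟩ := (List.isChain_cons_cons.1 hborder).1
      have hlast_mem : m.getLast hm ∈ m := List.getLast_mem hm
      have hlast : m.getLast hm = a :=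
        List.eq_of_mem_replicate (n := m.length) (hma ▸ hlast_mem)
      rintro x hx
      rw [List.flatten_cons, List.head?_append_of_ne_nil _ hm', List.head?_eq_some_head hm',
        Option.mem_some_iff] at hx
      subst hx
      refine eq_bar_of_ne (hword a ?_) (hword _ ?_) (hlast ▸ hne)
      · exact List.mem_flatten.2 ⟨m, by simp, hlast ▸ hlast_mem⟩
      · exact List.mem_flatten.2 ⟨m', by simp, List.head_mem hm'⟩
    rw [List.flatten_cons, List.map_cons, fromRuns, hrest, ← hma]

lemma eq_fromRuns_runLengths {v : List ℕ} {a : ℕ} (hv : IsWord v)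
    (ha : ∀ x ∈ v.head?, x = a) : v = fromRuns a (runLengths v) := by
  conv_lhs => rw [← List.flatten_splitBy (· = ·) v]
  refine flatten_eq_fromRuns (fun m hm => ⟨List.ne_nil_of_mem_splitBy hm, ?_⟩) ?_ ?_ ?_
  · exact (List.isChain_of_mem_splitBy hm).imp fun x y h => by simpa using h
  · refine (List.isChain_getLast_head_splitBy _ v).imp ?_
    rintro m m' ⟨hm, hm', h⟩
    exact ⟨hm, hm', by simpa using h⟩
  · rwa [List.flatten_splitBy]
  · rwa [List.flatten_splitBy]

lemma setOf_runLengths_mem_subset (R : Finset (List ℕ)) :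
    {v | IsWord v ∧ runLengths v ∈ R} ⊆
      ((({1, 2} : Finset ℕ) ×ˢ R).image fun p => fromRuns p.1 p.2 : Finset (List ℕ)) := by
  rintro v ⟨hv, hR⟩
  obtain ⟨a, ha, hhead⟩ : ∃ a, (a = 1 ∨ a = 2) ∧ ∀ x ∈ v.head?, x = a := by
    rcases v with _ | ⟨b, v⟩
    · exact ⟨1, by simp⟩
    · exact ⟨b, hv b List.mem_cons_self, by simp⟩
  simp only [Finset.coe_image, Set.mem_image, Finset.mem_coe, Finset.mem_product, Prod.exists]
  exact ⟨a, runLengths v, ⟨by simpa using ha, hR⟩, (eq_fromRuns_runLengths hv hhead).symm⟩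

lemma setOf_runLengths_mem_finite_and_ncard_le (R : Finset (List ℕ)) :
    {v | IsWord v ∧ runLengths v ∈ R}.Finite ∧
      {v | IsWord v ∧ runLengths v ∈ R}.ncard ≤ 2 * R.card := by
  have hsub := setOf_runLengths_mem_subset R
  refine ⟨Finset.finite_toSet _ |>.subset hsub, ?_⟩
  calc _ ≤ _ := Set.ncard_le_ncard hsub (Finset.finite_toSet _)
    _ ≤ (({1, 2} : Finset ℕ) ×ˢ R).card := by
      rw [Set.ncard_coe_finset]; exact Finset.card_image_le
    _ = 2 * R.card := by rw [Finset.card_product]; rfl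

lemma runLengths_mem_of_wderiv_eq {v w : List ℕ} (hD : wderiv v = w) :
    runLengths v ∈ ({w, 1 :: w, w ++ [1], 1 :: (w ++ [1])} : Finset (List ℕ)) := by
  simp only [wderiv] at hD
  split_ifs at hD with hfirst hlast hlast
  · rw [List.eq_cons_of_mem_head? hfirst, ← List.dropLast_append_getLast? 1 hlast, hD]
    simp
  · rw [List.eq_cons_of_mem_head? hfirst, hD]
    simp
  · rw [← List.dropLast_append_getLast? 1 hlast, hD]
    simp
  · simp [hD]

theorem stmt0_general (w : List ℕ) :
    {v | Primitive v w}.Finite ∧ {v | Primitive v w}.ncard ≤ 8 := by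
  have hsub : {v | Primitive v w} ⊆
      {v | IsWord v ∧ runLengths v ∈ ({w, 1 :: w, w ++ [1], 1 :: (w ++ [1])} : Finset _)} :=
    fun v ⟨hsmooth, hD⟩ => ⟨(hsmooth 0).1, runLengths_mem_of_wderiv_eq hD⟩
  obtain ⟨hfin, hcard⟩ := setOf_runLengths_mem_finite_and_ncard_le
    ({w, 1 :: w, w ++ [1], 1 :: (w ++ [1])} : Finset _)
  refine ⟨hfin.subset hsub, (Set.ncard_le_ncard hsub hfin).trans (hcard.trans ?_)⟩
  have := Finset.card_le_four (a := w) (b := 1 :: w) (c := w ++ [1]) (d := 1 :: (w ++ [1]))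
  omega

/-- Every nonempty smooth word has at most 8 primitives. -/
theorem stmt0 (w : List ℕ) (hw : SmoothWord w) (hne : w ≠ []) :
    {v | Primitive v w}.Finite ∧ {v | Primitive v w}.ncard ≤ 8 :=
  stmt0_general w
end

section
/- If v and v' are two primitives of the same smooth word w, then the lengths of v and v' differ by at most 2. -/
/-
`D` only regroups the letters of `v` into runs and then discards at most two runs of length one,
so `|v| - 2 ≤ ΣD(v) ≤ |v|`, where `ΣD(v)` is the sum of the letters of `D(v)`. Two primitives of `w`
therefore both have length in `[Σw, Σw + 2]`.
-/

theorem List.sum_eq_add_sum_tail {M : Type*} [AddMonoid M] {l : List M} {a : M}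
    (h : l.head? = some a) : l.sum = a + l.tail.sum := by
  rw [List.eq_cons_of_mem_head? h, List.sum_cons, List.tail_cons]

theorem List.sum_eq_sum_dropLast_add {M : Type*} [AddMonoid M] {l : List M} {a : M}
    (h : l.getLast? = some a) : l.sum = l.dropLast.sum + a := by
  rw [← List.dropLast_append_getLast? a h, List.sum_append, List.sum_singleton,
    List.dropLast_concat]

theorem sum_runLengths (v : List ℕ) : (runLengths v).sum = v.length := by
  rw [runLengths, ← List.length_flatten, List.flatten_splitBy]

theorem sum_wderiv_le_length_le_add_two (v : List ℕ) :
    (wderiv v).sum ≤ v.length ∧ v.length ≤ (wderiv v).sum + 2 := by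
  rw [← sum_runLengths, wderiv]
  generalize runLengths v = r
  split_ifs with hhead hlast hlast
  · rw [r.sum_eq_add_sum_tail hhead, r.tail.sum_eq_sum_dropLast_add hlast]; omega
  · rw [r.sum_eq_add_sum_tail hhead]; omega
  · rw [r.sum_eq_sum_dropLast_add hlast]; omega
  · omega

theorem stmt1_general (w v v' : List ℕ)
    (h : Primitive v w) (h' : Primitive v' w) :
    |(v.length : ℤ) - (v'.length : ℤ)| ≤ 2 := by
  have hv := sum_wderiv_le_length_le_add_two v
  have hv' := sum_wderiv_le_length_le_add_two v'
  rw [h.2] at hv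
  rw [h'.2] at hv'
  rw [abs_le]
  omega

/-- Two primitives of the same smooth word have lengths differing by at most 2. -/
theorem stmt1 (w v v' : List ℕ) (hw : SmoothWord w)
    (h : Primitive v w) (h' : Primitive v' w) :
    |(v.length : ℤ) - (v'.length : ℤ)| ≤ 2 :=
  stmt1_general w v v' h h'
end

section
/- Every smooth word u can be extended on the right by a single letter to a smooth word: there exists α ∈ {1,2} such that uα is smooth. -/
/-!
Induct on the length of `u`. Appending a letter only touches the last run of `u`: a new letter
adds a run of length one, a repeated letter lengthens the last run. If the last run of `u` has
length at least two, appending the other letter leaves `D u` unchanged. If it has length one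
(and `u` is not a single letter), `D` of `u` followed by the other letter, resp. the same letter,
is `D u` followed by `1`, resp. `2`; the induction hypothesis for the shorter smooth word `D u`
says which of the two is smooth.
-/

namespace List

variable {α : Type*}

theorem splitBy_concat_of_rel {r : α → α → Bool} {l g : List α} {L : List (List α)}
    (h : l.splitBy r = L ++ [g]) {a : α} (ha : ∀ x ∈ l.getLast?, r x a) :
    (l ++ [a]).splitBy r = L ++ [g ++ [a]] := by
  obtain ⟨hflat, hnil, hchain, hsep⟩ := splitBy_eq_iff.1 h
  have hg : g ≠ [] := fun hg => hnil (by simp [hg])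
  rw [splitBy_eq_iff]
  have hnil' : [] ∉ L := fun h' => hnil (mem_append_left _ h')
  refine ⟨by simp [hflat], by simpa using hnil', ?_, ?_⟩
  · intro m hm
    rcases mem_append.1 hm with hm | hm
    · exact hchain m (mem_append_left _ hm)
    · rw [mem_singleton.1 hm, isChain_append]
      refine ⟨hchain g (by simp), isChain_singleton a, fun x hx y hy => ?_⟩
      obtain rfl : a = y := by simpa using hy
      exact ha x (by simpa [hflat, getLast?_append, getLast?_eq_some_getLast hg] using hx)
  · rw [isChain_append] at hsep ⊢
    refine ⟨hsep.1, isChain_singleton _, ?_⟩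
    rintro x hx _ ⟨⟩
    obtain ⟨hx', _, hsep'⟩ := hsep.2.2 x hx g rfl
    exact ⟨hx', by simp, by rwa [head_append_of_ne_nil hg]⟩

theorem cube_infix_concat {w : List α} {a c : α} (h : [c, c, c] <:+: w ++ [a]) :
    [c, c, c] <:+: w ∨ [a, a] <:+ w := by
  rcases infix_concat_iff.1 h with h | h
  · obtain ⟨t, ht, hsuf⟩ := (suffix_concat_iff.1 h).resolve_left (by simp)
    have ht : [c, c] ++ [c] = t ++ [a] := ht
    obtain ⟨rfl, hca⟩ := append_inj' ht rfl
    obtain rfl := singleton_inj.1 hca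
    exact .inr hsuf
  · exact .inl h

theorem not_pair_suffix_of_ne_getLast {w : List α} (hw : w ≠ []) {a : α}
    (ha : a ≠ w.getLast hw) : ¬ [a, a] <:+ w :=
  fun h => ha (h.getLast (by simp))

end List

theorem runLengths_eq_nil {w : List ℕ} : runLengths w = [] ↔ w = [] := by
  simp [runLengths]

theorem exists_runLengths_eq_concat {w : List ℕ} (hw : w ≠ []) :
    ∃ r x, runLengths w = r ++ [x] :=
  ⟨_, _, (List.dropLast_append_getLast (runLengths_eq_nil.not.2 hw)).symm⟩

theorem pos_of_mem_runLengths {w : List ℕ} {x : ℕ} (hx : x ∈ runLengths w) : 0 < x := by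
  obtain ⟨m, hm, rfl⟩ := List.mem_map.1 hx
  exact List.length_pos_iff.2 (List.ne_nil_of_mem_splitBy hm)

theorem length_runLengths_le (w : List ℕ) : (runLengths w).length ≤ w.length := by
  calc (runLengths w).length ≤ (runLengths w).sum :=
        List.length_le_sum_of_one_le _ fun _ hx => pos_of_mem_runLengths hx
    _ = w.length := by simp [runLengths, ← List.length_flatten]

theorem runLengths_concat_of_ne {w : List ℕ} (hw : w ≠ []) {a : ℕ} (ha : a ≠ w.getLast hw) :
    runLengths (w ++ [a]) = runLengths w ++ [1] := by
  rw [runLengths, List.splitBy_append, List.map_append]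
  · rfl
  · simp only [List.getLast?_eq_some_getLast hw, Option.mem_def, Option.some.injEq,
      List.head?_cons, decide_eq_false_iff_not]
    rintro x rfl y rfl
    exact ha.symm

theorem runLengths_concat_getLast {w : List ℕ} (hw : w ≠ []) {r : List ℕ} {x : ℕ}
    (h : runLengths w = r ++ [x]) : runLengths (w ++ [w.getLast hw]) = r ++ [x + 1] := by
  obtain ⟨L, g, hLg⟩ : ∃ L g, w.splitBy (· = ·) = L ++ [g] :=
    ⟨_, _, (List.dropLast_append_getLast (List.splitBy_ne_nil.2 hw)).symm⟩
  rw [runLengths, hLg, List.map_append, List.map_singleton] at h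
  obtain ⟨rfl, hx⟩ := List.append_inj' h rfl
  obtain rfl := List.singleton_inj.1 hx
  rw [runLengths, List.splitBy_concat_of_rel hLg (by simp [List.getLast?_eq_some_getLast hw])]
  simp

def trimHead (r : List ℕ) : List ℕ := if r.head? = some 1 then r.tail else r

def trimLast (r : List ℕ) : List ℕ := if r.getLast? = some 1 then r.dropLast else r

theorem wderiv_eq (w : List ℕ) : wderiv w = trimLast (trimHead (runLengths w)) := rfl

theorem trimHead_append {r : List ℕ} (hr : r ≠ []) (s : List ℕ) :
    trimHead (r ++ s) = trimHead r ++ s := by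
  obtain ⟨x, r, rfl⟩ := List.exists_cons_of_ne_nil hr
  by_cases hx : x = 1 <;> simp [trimHead, hx]

theorem length_trimHead_le (r : List ℕ) : (trimHead r).length ≤ r.length := by
  unfold trimHead
  split <;> simp

theorem trimLast_concat_one (r : List ℕ) : trimLast (r ++ [1]) = r := by
  simp [trimLast]

theorem trimLast_concat_of_ne {x : ℕ} (hx : x ≠ 1) (r : List ℕ) :
    trimLast (r ++ [x]) = r ++ [x] := by
  simp [trimLast, hx]

theorem wderiv_eq_trimHead {w r : List ℕ} {x : ℕ} (h : runLengths w = r ++ [x]) (hx : x ≠ 1) :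
    wderiv w = trimHead (runLengths w) := by
  rw [wderiv_eq, h]
  rcases eq_or_ne r [] with rfl | hr
  · simp [trimHead, trimLast, hx]
  · rw [trimHead_append hr, trimLast_concat_of_ne hx]

theorem wderiv_eq_trimHead_of_concat_one {w r : List ℕ} (h : runLengths w = r ++ [1])
    (hr : r ≠ []) : wderiv w = trimHead r := by
  rw [wderiv_eq, h, trimHead_append hr, trimLast_concat_one]

theorem length_wderiv_lt_of_concat_one {w r : List ℕ} (h : runLengths w = r ++ [1])
    (hr : r ≠ []) : (wderiv w).length < w.length :=
  calc (wderiv w).length ≤ r.length :=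
        wderiv_eq_trimHead_of_concat_one h hr ▸ length_trimHead_le r
    _ < (runLengths w).length := by simp [h]
    _ ≤ w.length := length_runLengths_le w

theorem wderiv_concat_of_ne {w : List ℕ} (hw : w ≠ []) {a : ℕ} (ha : a ≠ w.getLast hw) :
    wderiv (w ++ [a]) = trimHead (runLengths w) := by
  rw [wderiv_eq, runLengths_concat_of_ne hw ha,
    trimHead_append (runLengths_eq_nil.not.2 hw), trimLast_concat_one]

theorem wderiv_concat_getLast {w r : List ℕ} (hw : w ≠ []) (h : runLengths w = r ++ [1])
    (hr : r ≠ []) : wderiv (w ++ [w.getLast hw]) = wderiv w ++ [2] := by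
  rw [wderiv_eq, runLengths_concat_getLast hw h, trimHead_append hr,
    trimLast_concat_of_ne (by decide), wderiv_eq_trimHead_of_concat_one h hr]

theorem not_pair_suffix_of_runLengths_eq_concat_one {w r : List ℕ}
    (h : runLengths w = r ++ [1]) (a : ℕ) : ¬ [a, a] <:+ w := by
  rintro ⟨s, rfl⟩
  have hsa : s ++ [a] ≠ [] := by simp
  obtain ⟨r', x, hr'⟩ := exists_runLengths_eq_concat hsa
  have hx : 0 < x := pos_of_mem_runLengths (w := s ++ [a]) (by simp [hr'])
  have hlong := runLengths_concat_getLast hsa hr'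
  rw [show s ++ [a] ++ [(s ++ [a]).getLast hsa] = s ++ [a, a] by simp, h] at hlong
  have := List.singleton_inj.1 (List.append_inj' hlong rfl).2
  omega

theorem Differentiable'.concat {w : List ℕ} (hw : Differentiable' w) {a : ℕ}
    (ha : a = 1 ∨ a = 2) (hsuf : ¬ [a, a] <:+ w) : Differentiable' (w ++ [a]) := by
  obtain ⟨hword, h1, h2⟩ := hw
  refine ⟨fun x hx => ?_, fun h => ?_, fun h => ?_⟩
  · rcases List.mem_append.1 hx with hx | hx
    · exact hword x hx
    · rwa [List.mem_singleton.1 hx]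
  · exact (List.cube_infix_concat h).elim h1 hsuf
  · exact (List.cube_infix_concat h).elim h2 hsuf

theorem smoothWord_iff (w : List ℕ) :
    SmoothWord w ↔ Differentiable' w ∧ SmoothWord (wderiv w) := by
  refine ⟨fun h => ⟨h 0, fun k => ?_⟩, fun ⟨h0, h⟩ k => ?_⟩
  · rw [← Function.iterate_succ_apply]
    exact h (k + 1)
  · cases k with
    | zero => exact h0
    | succ k => rw [Function.iterate_succ_apply]; exact h k

theorem SmoothWord.wderiv {w : List ℕ} (h : SmoothWord w) : SmoothWord (wderiv w) :=
  ((smoothWord_iff w).1 h).2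

theorem smoothWord_nil : SmoothWord [] := by
  intro k
  rw [Function.iterate_fixed rfl k]
  exact ⟨by simp [IsWord], by simp, by simp⟩

theorem bar_eq_one_or_two (a : ℕ) : bar a = 1 ∨ bar a = 2 := by
  unfold bar
  split <;> simp

theorem bar_ne_self (a : ℕ) : bar a ≠ a := by
  unfold bar
  split <;> omega

theorem smoothWord_singleton {a : ℕ} (ha : a = 1 ∨ a = 2) : SmoothWord [a] := by
  rw [smoothWord_iff, show wderiv [a] = [] from rfl]
  exact ⟨(smoothWord_nil 0).concat ha (by simp), smoothWord_nil⟩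

theorem smoothWord_concat_bar {w : List ℕ} (hw : Differentiable' w) (hne : w ≠ [])
    (h : SmoothWord (trimHead (runLengths w))) : SmoothWord (w ++ [bar (w.getLast hne)]) := by
  have hbar := bar_ne_self (w.getLast hne)
  rw [smoothWord_iff, wderiv_concat_of_ne hne hbar]
  exact ⟨hw.concat (bar_eq_one_or_two _) (List.not_pair_suffix_of_ne_getLast hne hbar), h⟩

theorem smoothWord_concat_getLast {w r : List ℕ} (hw : Differentiable' w) (hne : w ≠ [])
    (h : runLengths w = r ++ [1]) (hr : r ≠ []) (hs : SmoothWord (wderiv w ++ [2])) :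
    SmoothWord (w ++ [w.getLast hne]) := by
  rw [smoothWord_iff, wderiv_concat_getLast hne h hr]
  refine ⟨hw.concat (hw.1 _ (List.getLast_mem hne)) ?_, hs⟩
  exact not_pair_suffix_of_runLengths_eq_concat_one h _

/-- Every smooth word extends on the right by a single letter to a smooth word. -/
theorem stmt19 (u : List ℕ) (hu : SmoothWord u) :
    ∃ α, (α = 1 ∨ α = 2) ∧ SmoothWord (u ++ [α]) := by
  induction hn : u.length using Nat.strong_induction_on generalizing u with
  | _ n ih =>
  rcases eq_or_ne u [] with rfl | hne
  · exact ⟨1, .inl rfl, smoothWord_singleton (.inl rfl)⟩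
  have hd : Differentiable' u := hu 0
  obtain ⟨r, x, hr⟩ := exists_runLengths_eq_concat hne
  rcases eq_or_ne x 1 with rfl | hx
  · rcases eq_or_ne r [] with rfl | hr'
    · refine ⟨_, bar_eq_one_or_two _, smoothWord_concat_bar hd hne ?_⟩
      simpa [hr, trimHead] using smoothWord_nil
    obtain ⟨β, rfl | rfl, hβ⟩ :=
      ih _ (hn ▸ length_wderiv_lt_of_concat_one hr hr') _ hu.wderiv rfl
    · refine ⟨_, bar_eq_one_or_two _, smoothWord_concat_bar hd hne ?_⟩
      rwa [hr, trimHead_append hr', ← wderiv_eq_trimHead_of_concat_one hr hr']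
    · exact ⟨_, hd.1 _ (List.getLast_mem hne),
        smoothWord_concat_getLast hd hne hr hr' hβ⟩
  · exact ⟨_, bar_eq_one_or_two _,
      smoothWord_concat_bar hd hne (wderiv_eq_trimHead hr hx ▸ hu.wderiv)⟩
end
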